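/- arXiv:1904.10093 — 11 statements merged into one kernel-verified Lean document; each statement's English description precedes it below -/
import Mathlib

section
/- Let A and B be bounded lattices and let L be a pseudo-Kleene algebra whose bounded lattice reduct equals the product A × B. Then the Kleene complement in L of the element (0_A, 1_B) is (1_A, 0_B). -/
open scoped Classical

/-- A bounded involution lattice (BI-lattice): a bounded lattice with an
order-reversing involution. -/
class BILattice (α : Type*) extends Lattice α, BoundedOrder α where
  inv : α → α
  inv_anti : ∀ a b : α, a ≤ b → inv b ≤ inv a
  inv_inv : ∀ a : α, inv (inv a) = a

open BILattice

/-- A pseudo-Kleene algebra. -/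
class PseudoKleene (α : Type*) extends BILattice α where
  kleene : ∀ a b : α, a ⊓ inv a ≤ b ⊔ inv b

/-- A Brouwer–Zadeh lattice. -/
class BZLattice (α : Type*) extends PseudoKleene α where
  brou : α → α
  brou_anti : ∀ a b : α, a ≤ b → brou b ≤ brou a
  brou_inf : ∀ a : α, a ⊓ brou a = ⊥
  le_brou_brou : ∀ a : α, a ≤ brou (brou a)
  brou_brou : ∀ a : α, brou (brou a) = inv (brou a)

open BZLattice

/-- A PBZ*-lattice: a paraorthomodular BZ-lattice satisfying condition (∗). -/
class PBZLattice (α : Type*) extends BZLattice α where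
  paraortho : ∀ a b : α, a ≤ b → inv a ⊓ b = ⊥ → a = b
  star : ∀ a : α, brou (a ⊓ inv a) = brou a ⊔ brou (inv a)

/-- An antiortholattice: a PBZ*-lattice whose only sharp elements are ⊥ and ⊤. -/
class Antiortholattice (α : Type*) extends PBZLattice α where
  sharp_trivial : ∀ a : α, a ⊔ inv a = ⊤ → a = ⊥ ∨ a = ⊤

/-- If `A` and `B` are bounded lattices and `L` is a pseudo-Kleene algebra whose
bounded lattice reduct is the product `A × B` (the pseudo-Kleene structure being
given by an involution `inv` on `A × B`), then `inv (⊥, ⊤) = (⊤, ⊥)`. -/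
theorem kleene_prod_inv_bot_top {A B : Type*} [Lattice A] [BoundedOrder A]
    [Lattice B] [BoundedOrder B]
    (inv : A × B → A × B)
    (inv_anti : ∀ x y : A × B, x ≤ y → inv y ≤ inv x)
    (inv_inv : ∀ x : A × B, inv (inv x) = x)
    (kleene : ∀ x y : A × B, x ⊓ inv x ≤ y ⊔ inv y) :
    inv ((⊥ : A), (⊤ : B)) = ((⊤ : A), (⊥ : B)) := by
  have inv_bot : inv (⊥ : A × B) = ⊤ := by
    have h := inv_anti ⊥ (inv ⊤) bot_le
    rw [inv_inv] at h
    exact le_antisymm le_top h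
  have inv_top : inv (⊤ : A × B) = ⊥ := by
    have h := inv_anti (inv ⊥) ⊤ le_top
    rw [inv_inv] at h
    exact le_antisymm h bot_le
  have inv_sup : ∀ x y : A × B, inv (x ⊔ y) = inv x ⊓ inv y := by
    intro x y
    apply le_antisymm
    · exact le_inf (inv_anti _ _ le_sup_left) (inv_anti _ _ le_sup_right)
    · have hx : x ≤ inv (inv x ⊓ inv y) := by
        have := inv_anti _ _ (inf_le_left (a := inv x) (b := inv y))
        rwa [inv_inv] at this
      have hy : y ≤ inv (inv x ⊓ inv y) := by
        have := inv_anti _ _ (inf_le_right (a := inv x) (b := inv y))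
        rwa [inv_inv] at this
      have := inv_anti _ _ (sup_le hx hy)
      rwa [inv_inv] at this
  have inv_inf : ∀ x y : A × B, inv (x ⊓ y) = inv x ⊔ inv y := by
    intro x y
    apply le_antisymm
    · have h2 : inv (inv x ⊔ inv y) = x ⊓ y := by
        rw [inv_sup, inv_inv, inv_inv]
      exact le_of_eq (by rw [← h2, inv_inv])
    · exact sup_le (inv_anti _ _ inf_le_left) (inv_anti _ _ inf_le_right)
  set e : A × B := (⊥, ⊤) with he
  set f : A × B := (⊤, ⊥) with hf
  set p := inv e with hp
  set q := inv f with hq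
  have hef_sup : e ⊔ f = ⊤ := by
    apply Prod.ext <;> simp [he, hf, Prod.fst_sup, Prod.snd_sup, Prod.fst_top, Prod.snd_top]
  have hef_inf : e ⊓ f = ⊥ := by
    apply Prod.ext <;> simp [he, hf, Prod.fst_inf, Prod.snd_inf, Prod.fst_bot, Prod.snd_bot]
  have hpq_inf : p ⊓ q = ⊥ := by rw [hp, hq, ← inv_sup, hef_sup, inv_top]
  have hpq_sup : p ⊔ q = ⊤ := by rw [hp, hq, ← inv_inf, hef_inf, inv_bot]
  -- kleene inequalities
  have h1 : p.2 ≤ q.2 := by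
    have h := kleene e f
    have := h.2
    simpa [he, hf] using this
  have h2 : q.1 ≤ p.1 := by
    have h := kleene f e
    have := h.1
    simpa [he, hf] using this
  have hp2 : p.2 = ⊥ := by
    have : p.2 ⊓ q.2 = ⊥ := congrArg Prod.snd hpq_inf
    rwa [inf_eq_left.mpr h1] at this
  have hq1 : q.1 = ⊥ := by
    have : p.1 ⊓ q.1 = ⊥ := congrArg Prod.fst hpq_inf
    rwa [inf_eq_right.mpr h2] at this
  have hp1 : p.1 = ⊤ := by
    have : p.1 ⊔ q.1 = ⊤ := congrArg Prod.fst hpq_sup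
    rwa [hq1, sup_bot_eq] at this
  calc inv ((⊥ : A), (⊤ : B)) = p := rfl
    _ = (p.1, p.2) := rfl
    _ = ((⊤ : A), (⊥ : B)) := by rw [hp1, hp2]
end

section
/- If A and B are nontrivial bounded involution lattices and the product A × B is endowed with the trivial Brouwer complement (x~ = 0 for x ≠ 0 and 0~ = 1), then the resulting structure fails the identity (x ∧ x′)~ ≈ x~ ∨ x′~; moreover (0,1) and (1,0) are sharp elements of A × B (i.e., (0,1) ∨ (0,1)′ = 1). -/
open scoped Classical

open BILattice

open BZLattice

/-- If `A` and `B` are nontrivial BI-lattices and the product `A × B` is endowed with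
the trivial Brouwer complement, then the resulting structure fails condition (∗),
and `(⊥, ⊤)` and `(⊤, ⊥)` are sharp elements of `A × B`. -/
theorem prod_trivial_brouwer_fails_star {A B : Type*} [BILattice A] [BILattice B]
    (hA : (⊥ : A) ≠ ⊤) (hB : (⊥ : B) ≠ ⊤)
    (iv : A × B → A × B) (hiv : ∀ p : A × B, iv p = (BILattice.inv p.1, BILattice.inv p.2))
    (t : A × B → A × B) (ht : ∀ p : A × B, t p = if p = ⊥ then ⊤ else ⊥) :
    (¬ ∀ x : A × B, t (x ⊓ iv x) = t x ⊔ t (iv x)) ∧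
    ((⊥ : A), (⊤ : B)) ⊔ iv ((⊥ : A), (⊤ : B)) = ⊤ ∧
    ((⊤ : A), (⊥ : B)) ⊔ iv ((⊤ : A), (⊥ : B)) = ⊤ := by
  have invbotA : BILattice.inv (⊥ : A) = ⊤ := by
    refine le_antisymm le_top ?_
    have := BILattice.inv_anti (⊥ : A) (BILattice.inv ⊤) bot_le
    rwa [BILattice.inv_inv] at this
  have invtopA : BILattice.inv (⊤ : A) = ⊥ := by
    refine le_antisymm ?_ bot_le
    have := BILattice.inv_anti (BILattice.inv ⊥) (⊤ : A) le_top
    rwa [BILattice.inv_inv] at this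
  have invbotB : BILattice.inv (⊥ : B) = ⊤ := by
    refine le_antisymm le_top ?_
    have := BILattice.inv_anti (⊥ : B) (BILattice.inv ⊤) bot_le
    rwa [BILattice.inv_inv] at this
  have invtopB : BILattice.inv (⊤ : B) = ⊥ := by
    refine le_antisymm ?_ bot_le
    have := BILattice.inv_anti (BILattice.inv ⊥) (⊤ : B) le_top
    rwa [BILattice.inv_inv] at this
  refine ⟨?_, ?_, ?_⟩
  · intro h
    have hx := h ((⊥ : A), (⊤ : B))
    rw [hiv] at hx
    simp only [invbotA, invtopB] at hx
    have h1 : (((⊥ : A), (⊤ : B)) ⊓ ((⊤ : A), (⊥ : B)) : A × B) = ⊥ := by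
      rw [Prod.mk_inf_mk, inf_top_eq, top_inf_eq]
      rfl
    rw [h1, ht, ht, ht, if_pos rfl, if_neg, if_neg] at hx
    · simp only [sup_idem] at hx
      exact hB (congrArg Prod.snd hx.symm)
    · intro hc
      exact hA (congrArg Prod.fst hc).symm
    · intro hc
      exact hB (congrArg Prod.snd hc).symm
  · rw [hiv]
    simp only [invbotB, invbotA]
    rw [Prod.mk_sup_mk, sup_top_eq, top_sup_eq]
    rfl
  · rw [hiv]
    simp only [invbotB, invbotA, invtopA]
    rw [Prod.mk_sup_mk, sup_top_eq, top_sup_eq]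
    rfl
end

section
/- The bounded lattice reduct of any antiortholattice is directly irreducible, i.e., it is not isomorphic to a product of two nontrivial bounded lattices. -/
open scoped Classical

open BILattice

open BZLattice

/-- The bounded lattice reduct of any antiortholattice is directly irreducible:
it is not isomorphic (as a bounded lattice) to a product of two nontrivial
bounded lattices. -/
theorem antiortholattice_lattice_reduct_directly_irreducible
    {L : Type*} [Antiortholattice L] :
    ∀ (A B : Type*) [Lattice A] [BoundedOrder A] [Lattice B] [BoundedOrder B],
      (⊥ : A) ≠ ⊤ → (⊥ : B) ≠ ⊤ → IsEmpty (L ≃o A × B) := by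
  intro A B _ _ _ _ hA hB
  constructor
  intro f
  -- basic facts about the involution
  have inv_top : inv (⊤ : L) = ⊥ := by
    have h1 : inv (⊤ : L) ≤ inv (inv (⊥ : L)) := inv_anti _ _ le_top
    rw [BILattice.inv_inv] at h1
    exact le_bot_iff.mp h1
  -- the two "central" elements
  set e : L := f.symm (⊤, ⊥) with he
  set c : L := f.symm (⊥, ⊤) with hc
  have hfe : f e = (⊤, ⊥) := f.apply_symm_apply _
  have hfc : f c = (⊥, ⊤) := f.apply_symm_apply _
  have hsup : e ⊔ c = ⊤ := by
    apply f.injective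
    rw [map_sup, hfe, hfc, map_top]
    ext <;> simp [Prod.fst_top, Prod.snd_top, Prod.fst_bot, Prod.snd_bot]
  have hinf : e ⊓ c = ⊥ := by
    apply f.injective
    rw [map_inf, hfe, hfc, map_bot]
    ext <;> simp [Prod.fst_top, Prod.snd_top, Prod.fst_bot, Prod.snd_bot]
  -- distributivity coming from the product structure
  have hdist : e ⊓ (c ⊔ inv c) = (e ⊓ c) ⊔ (e ⊓ inv c) := by
    apply f.injective
    rw [map_inf, map_sup, map_sup, map_inf, map_inf, hfe, hfc]
    obtain ⟨u, v⟩ := f (inv c)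
    ext <;> simp [Prod.fst_top, Prod.snd_top, Prod.fst_bot, Prod.snd_bot]
  -- inv e ⊓ inv c = ⊥
  have hinvec : inv e ⊓ inv c = ⊥ := by
    have h1 : e ≤ inv (inv e ⊓ inv c) := by
      have := inv_anti (inv e ⊓ inv c) (inv e) inf_le_left
      rw [BILattice.inv_inv] at this; exact this
    have h2 : c ≤ inv (inv e ⊓ inv c) := by
      have := inv_anti (inv e ⊓ inv c) (inv c) inf_le_right
      rw [BILattice.inv_inv] at this; exact this
    have h3 : (⊤ : L) ≤ inv (inv e ⊓ inv c) := hsup ▸ sup_le h1 h2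
    have h4 : inv (inv e ⊓ inv c) = ⊤ := top_le_iff.mp h3
    have := congrArg inv h4
    rwa [BILattice.inv_inv, inv_top] at this
  -- e ⊓ inv e = ⊥
  have hkey : e ⊓ inv e = ⊥ := by
    have hk : e ⊓ inv e ≤ c ⊔ inv c := PseudoKleene.kleene e c
    have h1 : e ⊓ inv e ≤ e ⊓ (c ⊔ inv c) := le_inf inf_le_left hk
    rw [hdist, hinf, bot_sup_eq] at h1
    have h2 : e ⊓ inv e ≤ inv c := h1.trans inf_le_right
    have h3 : e ⊓ inv e ≤ inv e ⊓ inv c := le_inf inf_le_right h2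
    rw [hinvec] at h3
    exact le_bot_iff.mp h3
  -- e is sharp
  have hsharp : e ⊔ inv e = ⊤ := by
    apply PBZLattice.paraortho _ _ le_top
    rw [inf_top_eq]
    have h1 : inv (e ⊔ inv e) ≤ inv e := inv_anti _ _ le_sup_left
    have h2 : inv (e ⊔ inv e) ≤ e := by
      have := inv_anti _ _ (le_sup_right (a := e) (b := inv e))
      rwa [BILattice.inv_inv] at this
    have h3 : inv (e ⊔ inv e) ≤ e ⊓ inv e := le_inf h2 h1
    rw [hkey] at h3
    exact le_bot_iff.mp h3
  -- conclude
  rcases Antiortholattice.sharp_trivial e hsharp with h | h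
  · have : f e = f ⊥ := congrArg f h
    rw [hfe, map_bot] at this
    exact hA (congrArg Prod.fst this).symm
  · have : f e = f ⊤ := congrArg f h
    rw [hfe, map_top] at this
    exact hB (congrArg Prod.snd this)
end

section
/- Every paraorthomodular ortholattice is orthomodular. -/
open scoped Classical

open BILattice

open BZLattice

open BILattice in
/-- Every paraorthomodular ortholattice is orthomodular. -/
theorem paraorthomodular_ortholattice_orthomodular {L : Type*} [BILattice L]
    (ortho : ∀ x : L, x ⊔ inv x = ⊤)
    (para : ∀ a b : L, a ≤ b → inv a ⊓ b = ⊥ → a = b) :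
    ∀ a b : L, a ≤ b → b = (b ⊓ inv a) ⊔ a := by
  have ii : ∀ x : L, inv (inv x) = x := BILattice.inv_inv
  have inv_le_iff : ∀ x y : L, inv x ≤ y ↔ inv y ≤ x := by
    intro x y
    constructor
    · intro h; simpa [ii] using inv_anti _ _ h
    · intro h; simpa [ii] using inv_anti _ _ h
  have demorgan : ∀ x y : L, inv (x ⊔ y) = inv x ⊓ inv y := by
    intro x y
    apply le_antisymm
    · exact le_inf (inv_anti _ _ le_sup_left) (inv_anti _ _ le_sup_right)
    · rw [← ii (inv x ⊓ inv y)]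
      refine inv_anti _ _ (sup_le ?_ ?_)
      · calc x = inv (inv x) := (ii x).symm
          _ ≤ inv (inv x ⊓ inv y) := inv_anti _ _ inf_le_left
      · calc y = inv (inv y) := (ii y).symm
          _ ≤ inv (inv x ⊓ inv y) := inv_anti _ _ inf_le_right
  have inv_bot : inv (⊥ : L) = ⊤ := by
    have := ortho (⊥ : L); simpa using this
  have inv_top : inv (⊤ : L) = ⊥ := by
    rw [← inv_bot, ii]
  have inf_compl : ∀ x : L, inv x ⊓ x = ⊥ := by
    intro x
    have : inv (inv x ⊓ x) = ⊤ := by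
      have h : inv x ⊓ x = inv (x ⊔ inv x) := by rw [demorgan, ii, inf_comm]
      rw [h, ortho x, inv_top, inv_bot]
    calc inv x ⊓ x = inv (inv (inv x ⊓ x)) := (ii _).symm
      _ = ⊥ := by rw [this, inv_top]
  intro a b hab
  refine (para _ _ (sup_le inf_le_left hab) ?_).symm
  rw [demorgan, inf_assoc, inf_comm (inv a) b]
  exact inf_compl (b ⊓ inv a)
end

section
/- For any antiortholattice A satisfying the Strong De Morgan law (x ∧ y)~ ≈ x~ ∨ y~, the element 0 is meet-irreducible in the lattice reduct of A; conversely, any antiortholattice with 0 meet-irreducible satisfies Strong De Morgan. -/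
open scoped Classical

open BILattice

open BZLattice

section Aux
variable {L : Type*}

lemma my_inv_top [BILattice L] : (inv (⊤ : L)) = ⊥ := by
  have h : ∀ b : L, inv (⊤ : L) ≤ b := fun b => by
    have := inv_anti (α := L) (inv b) ⊤ le_top
    simpa [BILattice.inv_inv] using this
  exact le_antisymm (h ⊥) bot_le

lemma my_inv_bot [BILattice L] : (inv (⊥ : L)) = ⊤ := by
  have := congrArg (inv (α := L)) (my_inv_top (L := L))
  rw [BILattice.inv_inv] at this
  exact this.symm

lemma my_inv_sup [BILattice L] (a b : L) : inv (a ⊔ b) = inv a ⊓ inv b := by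
  apply le_antisymm
  · exact le_inf (inv_anti a (a ⊔ b) le_sup_left) (inv_anti b (a ⊔ b) le_sup_right)
  · have ha : a ≤ inv (inv a ⊓ inv b) := by
      have := inv_anti (inv a ⊓ inv b) (inv a) inf_le_left
      simpa [BILattice.inv_inv] using this
    have hb : b ≤ inv (inv a ⊓ inv b) := by
      have := inv_anti (inv a ⊓ inv b) (inv b) inf_le_right
      simpa [BILattice.inv_inv] using this
    have := inv_anti (a ⊔ b) (inv (inv a ⊓ inv b)) (sup_le ha hb)
    simpa [BILattice.inv_inv] using this

lemma brou_sharp [PBZLattice L] (a : L) : brou a ⊔ inv (brou a) = ⊤ := by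
  apply PBZLattice.paraortho _ _ le_top
  rw [inf_top_eq, my_inv_sup, BILattice.inv_inv]
  have h := BZLattice.brou_inf (brou a)
  rw [BZLattice.brou_brou] at h
  rw [inf_comm]
  exact h

lemma brou_trivial [Antiortholattice L] (a : L) : brou a = ⊥ ∨ brou a = ⊤ :=
  Antiortholattice.sharp_trivial _ (brou_sharp a)

lemma brou_of_ne_bot [Antiortholattice L] {a : L} (h : a ≠ ⊥) : brou a = ⊥ := by
  rcases brou_trivial a with h' | h'
  · exact h'
  · exfalso; apply h
    have := BZLattice.brou_inf a
    rw [h', inf_top_eq] at this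
    exact this

lemma brou_bot_cases [Antiortholattice L] : brou (⊥ : L) = ⊤ ∨ (⊥ : L) = ⊤ := by
  rcases brou_trivial (⊥ : L) with h | h
  · right
    have h2 := BZLattice.brou_brou (⊥ : L)
    rw [h, h, my_inv_bot] at h2
    exact h2
  · left; exact h

end Aux

open BZLattice in
/-- An antiortholattice satisfies the Strong De Morgan law iff 0 is
meet-irreducible in its lattice reduct. -/
theorem antiortholattice_sdm_iff_meetIrred {L : Type*} [Antiortholattice L] :
    (∀ x y : L, brou (x ⊓ y) = brou x ⊔ brou y) ↔
      (∀ x y : L, x ⊓ y = ⊥ → x = ⊥ ∨ y = ⊥) := by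
  by_cases htriv : (⊥ : L) = ⊤
  · have hall : ∀ z : L, z = ⊥ := fun z => le_antisymm (htriv ▸ le_top) bot_le
    constructor
    · intro _ x y _; left; exact hall x
    · intro _ x y; simp [hall x, hall y, hall (brou (⊥:L))]
  · have hbb : brou (⊥ : L) = ⊤ := (brou_bot_cases).resolve_right htriv
    constructor
    · intro hsdm x y hxy
      by_contra hc
      push_neg at hc
      have := hsdm x y
      rw [hxy, hbb, brou_of_ne_bot hc.1, brou_of_ne_bot hc.2, sup_idem] at this
      exact htriv this.symm
    · intro hmi x y
      by_cases hx : x = ⊥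
      · subst hx
        rw [bot_inf_eq, hbb]
        have : brou y ≤ (⊤ : L) := le_top
        rw [eq_comm, sup_eq_left, ← hbb]
        exact BZLattice.brou_anti _ _ bot_le
      · by_cases hy : y = ⊥
        · subst hy
          rw [inf_bot_eq, hbb, eq_comm, sup_eq_right, ← hbb]
          exact BZLattice.brou_anti _ _ bot_le
        · have hxy : x ⊓ y ≠ ⊥ := by
            intro h; rcases hmi x y h with h|h <;> [exact hx h; exact hy h]
          rw [brou_of_ne_bot hxy, brou_of_ne_bot hx, brou_of_ne_bot hy, sup_idem]
end

section
/- For any nonempty family (L_i)_{i∈I} of PBZ*-lattices, letting T(L) = {x ∈ L : x~ ∈ {0,1}} and D(L) = {x ∈ L : x~ = 0}, one has T(∏_{i∈I} L_i) = {0} ∪ ∏_{i∈I} D(L_i). -/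
open scoped Classical

open BILattice

open BZLattice

open BZLattice in
/-- For a nonempty family of PBZ*-lattices, `T(∏ L i) = {⊥} ∪ ∏ D(L i)`,
where the Brouwer complement on the product is computed componentwise:
an element `f` has componentwise Brouwer complement equal to `⊥` or `⊤` of the
product iff `f = ⊥` or every component of `f` is dense. -/
theorem T_of_product {ι : Type*} [Nonempty ι] (L : ι → Type*)
    [∀ i, PBZLattice (L i)] :
    {f : ∀ i, L i | (∀ i, brou (f i) = ⊥) ∨ (∀ i, brou (f i) = ⊤)} =
      {(⊥ : ∀ i, L i)} ∪ {f : ∀ i, L i | ∀ i, brou (f i) = ⊥} := by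
  ext f
  constructor
  · rintro (h | h)
    · exact Or.inr h
    · left
      have : f = ⊥ := by
        funext i
        have h1 : f i ⊓ brou (f i) = ⊥ := brou_inf (f i)
        rw [h i, inf_top_eq] at h1
        exact h1
      simp [this]
  · rintro (h | h)
    · right
      intro i
      simp only [Set.mem_singleton_iff] at h
      rw [h]
      have h1 : (⊤ : L i) ⊓ brou ⊤ = ⊥ := brou_inf ⊤
      have h2 : brou (⊤ : L i) = ⊥ := by simpa using h1
      have h3 : (⊤ : L i) ≤ brou (brou ⊤) := le_brou_brou ⊤
      rw [h2] at h3
      exact le_antisymm le_top h3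
    · exact Or.inl h
end

section
/- An antiortholattice L satisfies the inequality x ∧ y~~ ≤ x′~ ∨ y (condition SK) if and only if |L| ≤ 3, i.e., L is isomorphic to the one-, two-, or three-element chain antiortholattice. -/
open scoped Classical

open BILattice

open BZLattice

section Aux

variable {L : Type*} [Antiortholattice L]

lemma aux_inv_bot : (inv (⊥ : L)) = ⊤ := by
  apply le_antisymm le_top
  have := inv_anti (⊥ : L) (inv ⊤) bot_le
  rwa [BILattice.inv_inv] at this

lemma aux_inv_top' : (inv (⊤ : L)) = ⊥ := by
  have h := inv_anti (inv (⊥ : L)) ⊤ le_top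
  rw [BILattice.inv_inv] at h
  exact le_antisymm h bot_le

lemma aux_brou_top : (brou (⊤ : L)) = ⊥ := by
  have := brou_inf (⊤ : L)
  rwa [top_inf_eq] at this

lemma aux_brou_bot : (brou (⊥ : L)) = ⊤ := by
  have := le_brou_brou (⊤ : L)
  rw [aux_brou_top] at this
  exact le_antisymm le_top this

lemma aux_inv_inf_le (a b : L) : inv (a ⊓ b) ≤ inv a ⊔ inv b := by
  have h1 : inv (inv a ⊔ inv b) ≤ a := by
    have := inv_anti (inv a) (inv a ⊔ inv b) le_sup_left
    rwa [BILattice.inv_inv] at this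
  have h2 : inv (inv a ⊔ inv b) ≤ b := by
    have := inv_anti (inv b) (inv a ⊔ inv b) le_sup_right
    rwa [BILattice.inv_inv] at this
  have := inv_anti (inv (inv a ⊔ inv b)) (a ⊓ b) (le_inf h1 h2)
  rwa [BILattice.inv_inv] at this

lemma aux_brou_eq_bot {a : L} (ha : a ≠ ⊥) : brou a = ⊥ := by
  set s := brou a with hs
  have hinv : inv s = brou s := by
    rw [hs, ← brou_brou a]
  have hbot : s ⊓ inv s = ⊥ := by rw [hinv]; exact brou_inf s
  have htop : s ⊔ inv s = ⊤ := by
    apply le_antisymm le_top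
    have h1 : inv (s ⊓ inv s) ≤ inv s ⊔ inv (inv s) := aux_inv_inf_le s (inv s)
    rw [hbot, aux_inv_bot, BILattice.inv_inv] at h1
    calc (⊤ : L) ≤ inv s ⊔ s := h1
      _ ≤ s ⊔ inv s := by rw [sup_comm]
  rcases Antiortholattice.sharp_trivial s htop with h | h
  · exact h
  · exfalso
    apply ha
    have h2 : a ⊓ brou a = ⊥ := brou_inf a
    rw [← hs, h, inf_top_eq] at h2
    exact h2

lemma aux_sk_le (hSK : ∀ x y : L, x ⊓ brou (brou y) ≤ brou (inv x) ⊔ y)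
    {x y : L} (hx : x ≠ ⊤) (hy : y ≠ ⊥) : x ≤ y := by
  have h := hSK x y
  have hinvx : inv x ≠ ⊥ := by
    intro h0
    apply hx
    have h1 : inv (inv x) = inv (⊥ : L) := by rw [h0]
    rwa [BILattice.inv_inv, aux_inv_bot] at h1
  rw [aux_brou_eq_bot hy, aux_brou_bot, inf_top_eq,
      aux_brou_eq_bot hinvx, bot_sup_eq] at h
  exact h

end Aux

set_option maxHeartbeats 4000000 in
open BILattice BZLattice in
/-- An antiortholattice satisfies condition SK : `x ∧ y~~ ≤ x′~ ∨ y`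
iff it has at most 3 elements (i.e. it is the one-, two-, or three-element
chain antiortholattice). -/
theorem antiortholattice_sk_iff_card_le_three {L : Type*} [Antiortholattice L] :
    (∀ x y : L, x ⊓ brou (brou y) ≤ brou (inv x) ⊔ y) ↔
      (∀ a b c d : L, a = b ∨ a = c ∨ a = d ∨ b = c ∨ b = d ∨ c = d) := by
  constructor
  · intro hSK a b c d
    have key : ∀ x y : L, x = y ∨ (x = ⊥ ∨ x = ⊤) ∨ (y = ⊥ ∨ y = ⊤) := by
      intro x y
      by_cases hxt : x = ⊤
      · tauto
      by_cases hyb : y = ⊥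
      · tauto
      by_cases hyt : y = ⊤
      · tauto
      by_cases hxb : x = ⊥
      · tauto
      exact Or.inl (le_antisymm (aux_sk_le hSK hxt hyb) (aux_sk_le hSK hyt hxb))
    have tri : ∀ x : L, x = ⊥ ∨ x = ⊤ ∨ (x ≠ ⊥ ∧ x ≠ ⊤) := by tauto
    have mid : ∀ x y : L, (x ≠ ⊥ ∧ x ≠ ⊤) → (y ≠ ⊥ ∧ y ≠ ⊤) → x = y := by
      intro x y hx hy
      rcases key x y with h | h | h
      · exact h
      · tauto
      · tauto
    rcases tri a with rfl | rfl | ha <;> rcases tri b with rfl | rfl | hb <;>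
      rcases tri c with rfl | rfl | hc <;> rcases tri d with rfl | rfl | hd <;>
      first
        | tauto
        | exact Or.inl (mid _ _ ha hb)
        | exact Or.inr (Or.inl (mid _ _ ha hc))
        | exact Or.inr (Or.inr (Or.inl (mid _ _ ha hd)))
        | exact Or.inr (Or.inr (Or.inr (Or.inl (mid _ _ hb hc))))
        | exact Or.inr (Or.inr (Or.inr (Or.inr (Or.inl (mid _ _ hb hd)))))
        | exact Or.inr (Or.inr (Or.inr (Or.inr (Or.inr (mid _ _ hc hd)))))
  · intro h x y
    rcases h x y ⊥ ⊤ with rfl | rfl | rfl | rfl | rfl | hbt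
    · exact inf_le_left.trans le_sup_right
    · simp
    · rw [aux_inv_top', aux_brou_bot]; simp
    · rw [aux_brou_bot, aux_brou_top]; simp
    · simp
    · exact le_trans le_top (hbt ▸ bot_le)
end

section
/- For any subvariety V of the variety of bounded involution lattices: the three-element involution chain D3 belongs to V if and only if V contains all Kleene algebras; and D3 does not belong to V if and only if every member of V is an ortholattice. Consequently (OL, KA) is a splitting pair in the lattice of subvarieties of BI-lattices. -/
open scoped Classical

open BILattice

open BZLattice

/-- Terms in the language of bounded involution lattices, with `n` variables. -/
inductive BITerm : ℕ → Type
  | var {n : ℕ} : Fin n → BITerm n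
  | bot {n : ℕ} : BITerm n
  | top {n : ℕ} : BITerm n
  | meet {n : ℕ} : BITerm n → BITerm n → BITerm n
  | join {n : ℕ} : BITerm n → BITerm n → BITerm n
  | invo {n : ℕ} : BITerm n → BITerm n

/-- Evaluation of a BI-term with explicitly supplied operations. -/
def BITerm.evalWith {α : Type*} (mt jn : α → α → α) (bo tp : α) (iv : α → α) :
    ∀ {n : ℕ}, BITerm n → (Fin n → α) → α
  | _, .var i, v => v i
  | _, .bot, _ => bo
  | _, .top, _ => tp
  | _, .meet t₁ t₂, v => mt (t₁.evalWith mt jn bo tp iv v) (t₂.evalWith mt jn bo tp iv v)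
  | _, .join t₁ t₂, v => jn (t₁.evalWith mt jn bo tp iv v) (t₂.evalWith mt jn bo tp iv v)
  | _, .invo t₁, v => iv (t₁.evalWith mt jn bo tp iv v)

/-- Evaluation of a BI-term in a BI-lattice. -/
def BITerm.eval {α : Type*} [BILattice α] {n : ℕ} (t : BITerm n) (v : Fin n → α) : α :=
  t.evalWith (· ⊓ ·) (· ⊔ ·) ⊥ ⊤ BILattice.inv v

/-- The three-element involution chain `D3`, realized on `Fin 3`. -/
instance : BILattice (Fin 3) where
  inv := fun i => 2 - i
  inv_anti := by decide
  inv_inv := by decide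

/-- `β` satisfies all equations in the set `E`. -/
def SatAll (β : Type*) [BILattice β] (E : Set (Σ n : ℕ, BITerm n × BITerm n)) : Prop :=
  ∀ e ∈ E, ∀ v : Fin e.1 → β, e.2.1.eval v = e.2.2.eval v

/-- `β` is a Kleene algebra: a distributive pseudo-Kleene algebra. -/
def IsKleeneAlg (β : Type*) [BILattice β] : Prop :=
  (∀ x y z : β, x ⊓ (y ⊔ z) = (x ⊓ y) ⊔ (x ⊓ z)) ∧
  (∀ a b : β, a ⊓ BILattice.inv a ≤ b ⊔ BILattice.inv b)

/-- `β` is an ortholattice. -/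
def IsOrtho (β : Type*) [BILattice β] : Prop :=
  ∀ x : β, x ⊓ BILattice.inv x = ⊥

/-! ### Auxiliary lemmas -/

section BILBasic
variable {α : Type*} [BILattice α]

lemma bi_inv_top : (inv ⊤ : α) = ⊥ := by
  refine le_antisymm ?_ bot_le
  have := inv_anti (inv (⊥ : α)) ⊤ le_top
  rwa [BILattice.inv_inv] at this

lemma bi_inv_bot : (inv ⊥ : α) = ⊤ := by
  rw [← bi_inv_top, BILattice.inv_inv]

lemma bi_inv_inf (a b : α) : inv (a ⊓ b) = inv a ⊔ inv b := by
  refine le_antisymm ?_ (sup_le (inv_anti _ _ inf_le_left) (inv_anti _ _ inf_le_right))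
  have h : inv (inv a ⊔ inv b) ≤ a ⊓ b := by
    refine le_inf ?_ ?_
    · have := inv_anti (inv a) (inv a ⊔ inv b) le_sup_left
      rwa [BILattice.inv_inv] at this
    · have := inv_anti (inv b) (inv a ⊔ inv b) le_sup_right
      rwa [BILattice.inv_inv] at this
  have := inv_anti _ _ h
  rwa [BILattice.inv_inv] at this

lemma bi_inv_sup (a b : α) : inv (a ⊔ b) = inv a ⊓ inv b := by
  have := bi_inv_inf (inv a) (inv b)
  rw [BILattice.inv_inv, BILattice.inv_inv] at this
  rw [← this, BILattice.inv_inv]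

end BILBasic

/-- Unfolding lemmas for `BITerm.eval`. -/
@[simp] lemma BITerm.eval_var {α : Type*} [BILattice α] {n : ℕ} (i : Fin n) (v : Fin n → α) :
    (BITerm.var i).eval v = v i := by
  unfold BITerm.eval; rw [BITerm.evalWith]

@[simp] lemma BITerm.eval_bot {α : Type*} [BILattice α] {n : ℕ} (v : Fin n → α) :
    (BITerm.bot).eval v = ⊥ := by
  unfold BITerm.eval; rw [BITerm.evalWith]

@[simp] lemma BITerm.eval_top {α : Type*} [BILattice α] {n : ℕ} (v : Fin n → α) :
    (BITerm.top).eval v = ⊤ := by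
  unfold BITerm.eval; rw [BITerm.evalWith]

@[simp] lemma BITerm.eval_meet {α : Type*} [BILattice α] {n : ℕ} (t₁ t₂ : BITerm n)
    (v : Fin n → α) : (t₁.meet t₂).eval v = t₁.eval v ⊓ t₂.eval v := by
  unfold BITerm.eval; rw [BITerm.evalWith]

@[simp] lemma BITerm.eval_join {α : Type*} [BILattice α] {n : ℕ} (t₁ t₂ : BITerm n)
    (v : Fin n → α) : (t₁.join t₂).eval v = t₁.eval v ⊔ t₂.eval v := by
  unfold BITerm.eval; rw [BITerm.evalWith]

@[simp] lemma BITerm.eval_invo {α : Type*} [BILattice α] {n : ℕ} (t₁ : BITerm n)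
    (v : Fin n → α) : (t₁.invo).eval v = BILattice.inv (t₁.eval v) := by
  unfold BITerm.eval; rw [BITerm.evalWith]

/-- Homomorphisms commute with term evaluation. -/
lemma bi_hom_eval {β γ : Type*} [BILattice β] [BILattice γ] (f : β → γ)
    (hb : f ⊥ = ⊥) (ht : f ⊤ = ⊤)
    (hm : ∀ x y : β, f (x ⊓ y) = f x ⊓ f y) (hj : ∀ x y : β, f (x ⊔ y) = f x ⊔ f y)
    (hi : ∀ x : β, f (BILattice.inv x) = BILattice.inv (f x)) :
    ∀ {n : ℕ} (t : BITerm n) (v : Fin n → β), f (t.eval v) = t.eval (f ∘ v) := by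
  intro n t
  induction t with
  | var i => intro v; simp
  | bot => intro v; simpa using hb
  | top => intro v; simpa using ht
  | meet t₁ t₂ ih₁ ih₂ => intro v; simp [hm, ih₁, ih₂]
  | join t₁ t₂ ih₁ ih₂ => intro v; simp [hj, ih₁, ih₂]
  | invo t₁ ih => intro v; simp [hi, ih]

/-! ### Kalman's theorem machinery -/

/-- The basic three-valued table used for the Kalman homomorphism. -/
def kalG : Bool → Bool → Fin 3 := fun A B =>
  if A then (if B then 1 else 0) else (if B then 2 else 1)

lemma kalG_inf : ∀ A B C D : Bool, (A && B && !C && !D) = false →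
    (C && D && !A && !B) = false → kalG (A || C) (B && D) = kalG A B ⊓ kalG C D := by decide

lemma kalG_sup : ∀ A B C D : Bool, (A && B && !C && !D) = false →
    (C && D && !A && !B) = false → kalG (A && C) (B || D) = kalG A B ⊔ kalG C D := by decide

lemma kalG_inv : ∀ A B : Bool, kalG B A = BILattice.inv (kalG A B) := by decide

lemma kalG_sep : ∀ B D : Bool, (B || !D) = true → ¬ kalG false B ≤ kalG true D := by decide

lemma kalman_hom {β : Type*} [BILattice β] (hK : IsKleeneAlg β) {a b : β} (hab : ¬ a ≤ b) :
    ∃ f : β → Fin 3, f ⊥ = ⊥ ∧ f ⊤ = ⊤ ∧ (∀ x y : β, f (x ⊓ y) = f x ⊓ f y) ∧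
      (∀ x y : β, f (x ⊔ y) = f x ⊔ f y) ∧
      (∀ x : β, f (BILattice.inv x) = BILattice.inv (f x)) ∧ ¬ f a ≤ f b := by
  obtain ⟨hd, hk⟩ := hK
  letI : DistribLattice β := DistribLattice.ofInfSupLe fun x y z => le_of_eq (hd x y z)
  have main : ∃ J : Order.Ideal β, J.IsPrime ∧ b ∈ J ∧ a ∉ J ∧
      (BILattice.inv a ∈ J ∨ BILattice.inv b ∉ J) := by
    by_cases h1 : a ⊓ BILattice.inv b ≤ b
    · by_cases h2 : a ≤ b ⊔ BILattice.inv a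
      · exfalso
        apply hab
        have haa : a ⊓ BILattice.inv a ≤ b := by
          have e1 : a ⊓ BILattice.inv a ≤ b ⊔ BILattice.inv b := hk a b
          calc a ⊓ BILattice.inv a
              = (a ⊓ BILattice.inv a) ⊓ b ⊔ (a ⊓ BILattice.inv a) ⊓ BILattice.inv b := by
                rw [← hd]; exact ((inf_eq_left.mpr e1).symm)
            _ ≤ b ⊔ (a ⊓ BILattice.inv b) :=
                sup_le_sup inf_le_right (inf_le_inf_right _ inf_le_left)
            _ ≤ b ⊔ b := sup_le_sup_left h1 _
            _ = b := sup_idem b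
        calc a = a ⊓ (b ⊔ BILattice.inv a) := (inf_eq_left.mpr h2).symm
          _ = a ⊓ b ⊔ a ⊓ BILattice.inv a := hd _ _ _
          _ ≤ b := sup_le inf_le_right haa
      · -- separate the filter ↑a from the ideal ↓(b ⊔ inv a)
        have hdisj : Disjoint (Order.PFilter.principal a : Set β)
            ((Order.Ideal.principal (b ⊔ BILattice.inv a) : Order.Ideal β) : Set β) := by
          rw [Set.disjoint_left]
          intro x hxF hxI
          rw [SetLike.mem_coe, Order.PFilter.mem_principal] at hxF
          rw [SetLike.mem_coe, Order.Ideal.mem_principal] at hxI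
          exact h2 (le_trans hxF hxI)
        obtain ⟨J, hJp, hIJ, hFJ⟩ := DistribLattice.prime_ideal_of_disjoint_filter_ideal hdisj
        refine ⟨J, hJp, J.lower le_sup_left (hIJ Order.Ideal.mem_principal_self),
          ?_, Or.inl (J.lower le_sup_right (hIJ Order.Ideal.mem_principal_self))⟩
        intro haJ
        exact Set.disjoint_left.mp hFJ
          (by rw [SetLike.mem_coe, Order.PFilter.mem_principal]) haJ
    · -- separate the filter ↑(a ⊓ inv b) from the ideal ↓b
      have hdisj : Disjoint (Order.PFilter.principal (a ⊓ BILattice.inv b) : Set β)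
          ((Order.Ideal.principal b : Order.Ideal β) : Set β) := by
        rw [Set.disjoint_left]
        intro x hxF hxI
        rw [SetLike.mem_coe, Order.PFilter.mem_principal] at hxF
        rw [SetLike.mem_coe, Order.Ideal.mem_principal] at hxI
        exact h1 (le_trans hxF hxI)
      obtain ⟨J, hJp, hIJ, hFJ⟩ := DistribLattice.prime_ideal_of_disjoint_filter_ideal hdisj
      refine ⟨J, hJp, hIJ Order.Ideal.mem_principal_self, ?_, Or.inr ?_⟩
      · intro haJ
        exact Set.disjoint_left.mp hFJ
          (by rw [SetLike.mem_coe, Order.PFilter.mem_principal]; exact inf_le_left) haJ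
      · intro hbJ
        exact Set.disjoint_left.mp hFJ
          (by rw [SetLike.mem_coe, Order.PFilter.mem_principal]; exact inf_le_right) hbJ
  obtain ⟨J, hJp, hbJ, haJ, hside⟩ := main
  have hmem_inf : ∀ x y : β, x ⊓ y ∈ J ↔ x ∈ J ∨ y ∈ J := fun x y =>
    ⟨hJp.mem_or_mem, fun h => h.elim (fun h => J.lower inf_le_left h)
      (fun h => J.lower inf_le_right h)⟩
  have hmem_sup : ∀ x y : β, x ⊔ y ∈ J ↔ x ∈ J ∧ y ∈ J := fun x y =>
    ⟨fun h => ⟨J.lower le_sup_left h, J.lower le_sup_right h⟩, fun h => J.sup_mem h.1 h.2⟩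
  have htopJ : (⊤ : β) ∉ J := hJp.toIsProper.top_notMem
  have hnomix : ∀ x y : β, x ∈ J → BILattice.inv x ∈ J → y ∉ J → BILattice.inv y ∉ J → False := by
    intro x y hx hx' hy hy'
    have h1 : y ⊓ BILattice.inv y ∈ J := J.lower (hk y x) (J.sup_mem hx hx')
    rcases hJp.mem_or_mem h1 with h | h
    exacts [hy h, hy' h]
  have hmixf : ∀ x y : β, (decide (x ∈ J) && decide (BILattice.inv x ∈ J) &&
      !decide (y ∈ J) && !decide (BILattice.inv y ∈ J)) = false := by
    intro x y
    by_contra hcon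
    rw [Bool.not_eq_false] at hcon
    simp only [Bool.and_eq_true, Bool.not_eq_true', decide_eq_true_eq,
      decide_eq_false_iff_not] at hcon
    exact hnomix x y hcon.1.1.1 hcon.1.1.2 hcon.1.2 hcon.2
  refine ⟨fun x => kalG (decide (x ∈ J)) (decide (BILattice.inv x ∈ J)), ?_, ?_, ?_, ?_, ?_, ?_⟩
  · show kalG (decide ((⊥ : β) ∈ J)) (decide (BILattice.inv (⊥ : β) ∈ J)) = ⊥
    rw [decide_eq_true J.bot_mem, show decide (BILattice.inv (⊥ : β) ∈ J) = false from by
      rw [bi_inv_bot]; exact decide_eq_false htopJ]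
    decide
  · show kalG (decide ((⊤ : β) ∈ J)) (decide (BILattice.inv (⊤ : β) ∈ J)) = ⊤
    rw [decide_eq_false htopJ, show decide (BILattice.inv (⊤ : β) ∈ J) = true from by
      rw [bi_inv_top]; exact decide_eq_true J.bot_mem]
    decide
  · intro x y
    show kalG (decide (x ⊓ y ∈ J)) (decide (BILattice.inv (x ⊓ y) ∈ J)) = _
    have e1 : decide (x ⊓ y ∈ J) = (decide (x ∈ J) || decide (y ∈ J)) := by
      rw [decide_eq_decide.mpr (hmem_inf x y), Bool.decide_or]
    have e2 : decide (BILattice.inv (x ⊓ y) ∈ J) =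
        (decide (BILattice.inv x ∈ J) && decide (BILattice.inv y ∈ J)) := by
      rw [bi_inv_inf, decide_eq_decide.mpr (hmem_sup _ _), Bool.decide_and]
    rw [e1, e2]
    exact kalG_inf _ _ _ _ (hmixf x y) (hmixf y x)
  · intro x y
    show kalG (decide (x ⊔ y ∈ J)) (decide (BILattice.inv (x ⊔ y) ∈ J)) = _
    have e1 : decide (x ⊔ y ∈ J) = (decide (x ∈ J) && decide (y ∈ J)) := by
      rw [decide_eq_decide.mpr (hmem_sup x y), Bool.decide_and]
    have e2 : decide (BILattice.inv (x ⊔ y) ∈ J) =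
        (decide (BILattice.inv x ∈ J) || decide (BILattice.inv y ∈ J)) := by
      rw [bi_inv_sup, decide_eq_decide.mpr (hmem_inf _ _), Bool.decide_or]
    rw [e1, e2]
    exact kalG_sup _ _ _ _ (hmixf x y) (hmixf y x)
  · intro x
    show kalG (decide (BILattice.inv x ∈ J)) (decide (BILattice.inv (BILattice.inv x) ∈ J)) = _
    rw [BILattice.inv_inv]
    exact kalG_inv _ _
  · show ¬ kalG (decide (a ∈ J)) (decide (BILattice.inv a ∈ J)) ≤
        kalG (decide (b ∈ J)) (decide (BILattice.inv b ∈ J))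
    rw [decide_eq_false haJ, decide_eq_true hbJ]
    apply kalG_sep
    rcases hside with h | h
    · rw [decide_eq_true h]; simp
    · rw [decide_eq_false h]; simp

/-! ### Transfer to `ULift` -/

universe v

instance instBILatticeULift {α : Type*} [BILattice α] : BILattice (ULift.{v} α) where
  inv x := ULift.up (BILattice.inv x.down)
  inv_anti a b h := inv_anti a.down b.down h
  inv_inv a := by
    show ULift.up (BILattice.inv (BILattice.inv a.down)) = a
    rw [BILattice.inv_inv]

lemma bi_up_eval {α : Type*} [BILattice α] :
    ∀ {n : ℕ} (t : BITerm n) (v : Fin n → α),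
      t.eval (fun i => ULift.up.{v} (v i)) = ULift.up (t.eval v) := by
  intro n t
  induction t with
  | var i => intro v; simp
  | bot => intro v; simp
  | top => intro v; simp
  | meet t₁ t₂ ih₁ ih₂ => intro v; simp [ih₁, ih₂]
  | join t₁ t₂ ih₁ ih₂ => intro v; simp [ih₁, ih₂]
  | invo t₁ ih => intro v; simp [ih]; rfl

lemma satAll_down {E : Set (Σ n : ℕ, BITerm n × BITerm n)}
    (h : SatAll (ULift.{v} (Fin 3)) E) : SatAll (Fin 3) E := by
  intro e he w
  have h1 := h e he (fun i => ULift.up (w i))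
  rw [bi_up_eval, bi_up_eval] at h1
  exact congrArg ULift.down h1

lemma satAll_up {E : Set (Σ n : ℕ, BITerm n × BITerm n)}
    (h : SatAll (Fin 3) E) : SatAll (ULift.{v} (Fin 3)) E := by
  intro e he w
  have h2 := congrArg ULift.up (h e he (fun i => (w i).down))
  rw [← bi_up_eval, ← bi_up_eval] at h2
  simpa only [ULift.up_down] using h2

lemma ulift_kleene : IsKleeneAlg (ULift.{v} (Fin 3)) := by
  constructor
  · intro x y z
    have h : ∀ p q r : Fin 3, p ⊓ (q ⊔ r) = p ⊓ q ⊔ p ⊓ r := by decide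
    exact congrArg ULift.up (h x.down y.down z.down)
  · intro x y
    have h : ∀ p q : Fin 3, p ⊓ BILattice.inv p ≤ q ⊔ BILattice.inv q := by decide
    exact h x.down y.down

lemma ulift_not_ortho : ¬ IsOrtho (ULift.{v} (Fin 3)) := by
  intro h
  have h2 : (1 : Fin 3) ⊓ BILattice.inv 1 = ⊥ := congrArg ULift.down (h (ULift.up 1))
  exact absurd h2 (by decide)

/-! ### The four-element chain argument -/

def chainE {β : Type*} [BILattice β] (a : β) : Fin 4 → β
  | 0 => ⊥
  | 1 => a
  | 2 => BILattice.inv a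
  | 3 => ⊤

def chainG : Fin 4 → Fin 3
  | 0 => 0
  | 1 => 1
  | 2 => 1
  | 3 => 2

def chainL : Fin 3 → Fin 4
  | 0 => 0
  | 1 => 1
  | 2 => 3

def chainI : Fin 4 → Fin 4
  | 0 => 3
  | 1 => 2
  | 2 => 1
  | 3 => 0

lemma chainG_inf : ∀ i j : Fin 4, chainG (i ⊓ j) = chainG i ⊓ chainG j := by decide
lemma chainG_sup : ∀ i j : Fin 4, chainG (i ⊔ j) = chainG i ⊔ chainG j := by decide
lemma chainG_inv : ∀ i : Fin 4, chainG (chainI i) = BILattice.inv (chainG i) := by decide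
lemma chainG_lift : ∀ k : Fin 3, chainG (chainL k) = k := by decide

lemma chain_transfer {E : Set (Σ n : ℕ, BITerm n × BITerm n)} {β : Type*} [BILattice β]
    (hβ : SatAll β E) {x : β} (hx : x ⊓ BILattice.inv x ≠ ⊥) : SatAll (Fin 3) E := by
  set a : β := x ⊓ BILattice.inv x with hadef
  have haa : a ≤ BILattice.inv a := by
    rw [hadef, bi_inv_inf, BILattice.inv_inv]
    exact le_trans inf_le_left le_sup_right
  have hane : a ≠ ⊥ := hx
  have hinvne_bot : BILattice.inv a ≠ ⊥ := fun h => hane (le_bot_iff.mp (h ▸ haa))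
  have hinvne_top : BILattice.inv a ≠ ⊤ := by
    intro h
    apply hane
    have h2 := congrArg BILattice.inv h
    rwa [BILattice.inv_inv, bi_inv_top] at h2
  have hane_top : a ≠ ⊤ := by
    intro h
    apply hinvne_bot
    rw [h, bi_inv_top]
  have emono : ∀ i j : Fin 4, i ≤ j → chainE a i ≤ chainE a j := by
    intro i j h
    fin_cases i <;> fin_cases j <;>
      first
        | exact absurd h (by decide)
        | exact bot_le
        | exact le_top
        | exact le_refl _
        | exact haa
  have einf : ∀ i j : Fin 4, chainE a i ⊓ chainE a j = chainE a (i ⊓ j) := by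
    intro i j
    rcases le_total i j with h | h
    · rw [inf_eq_left.mpr (emono i j h), inf_eq_left.mpr h]
    · rw [inf_eq_right.mpr (emono j i h), inf_eq_right.mpr h]
  have esup : ∀ i j : Fin 4, chainE a i ⊔ chainE a j = chainE a (i ⊔ j) := by
    intro i j
    rcases le_total i j with h | h
    · rw [sup_eq_right.mpr (emono i j h), sup_eq_right.mpr h]
    · rw [sup_eq_left.mpr (emono j i h), sup_eq_left.mpr h]
  have einv : ∀ i : Fin 4, BILattice.inv (chainE a i) = chainE a (chainI i) := by
    intro i
    fin_cases i
    · exact bi_inv_bot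
    · rfl
    · exact BILattice.inv_inv a
    · exact bi_inv_top
  have efun : ∀ i j : Fin 4, chainE a i = chainE a j → chainG i = chainG j := by
    intro i j h
    fin_cases i <;> fin_cases j <;>
      first
        | rfl
        | exact absurd h hane
        | exact absurd h.symm hane
        | exact absurd h hinvne_bot
        | exact absurd h.symm hinvne_bot
        | exact absurd h hane_top
        | exact absurd h.symm hane_top
        | exact absurd h hinvne_top
        | exact absurd h.symm hinvne_top
        | exact absurd (le_bot_iff.mp (le_trans le_top (le_of_eq h.symm))) hane
        | exact absurd (le_bot_iff.mp (le_trans le_top (le_of_eq h))) hane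
  have key : ∀ {n : ℕ} (t : BITerm n) (w : Fin n → Fin 3),
      ∃ i : Fin 4, t.eval (fun k => chainE a (chainL (w k))) = chainE a i ∧
        chainG i = t.eval w := by
    intro n t
    induction t with
    | var k => intro w; exact ⟨chainL (w k), by simp, by rw [chainG_lift]; simp⟩
    | bot => intro w; exact ⟨0, by simp; rfl, by simp; rfl⟩
    | top => intro w; exact ⟨3, by simp; rfl, by simp; rfl⟩
    | meet t₁ t₂ ih₁ ih₂ =>
      intro w
      obtain ⟨i, hi1, hi2⟩ := ih₁ w
      obtain ⟨j, hj1, hj2⟩ := ih₂ w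
      refine ⟨i ⊓ j, ?_, ?_⟩
      · simp only [BITerm.eval_meet]
        rw [hi1, hj1, einf]
      · simp only [BITerm.eval_meet]
        rw [chainG_inf, hi2, hj2]
    | join t₁ t₂ ih₁ ih₂ =>
      intro w
      obtain ⟨i, hi1, hi2⟩ := ih₁ w
      obtain ⟨j, hj1, hj2⟩ := ih₂ w
      refine ⟨i ⊔ j, ?_, ?_⟩
      · simp only [BITerm.eval_join]
        rw [hi1, hj1, esup]
      · simp only [BITerm.eval_join]
        rw [chainG_sup, hi2, hj2]
    | invo t₁ ih =>
      intro w
      obtain ⟨i, hi1, hi2⟩ := ih w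
      refine ⟨chainI i, ?_, ?_⟩
      · simp only [BITerm.eval_invo]
        rw [hi1, einv]
      · simp only [BITerm.eval_invo]
        rw [chainG_inv, hi2]
  intro e he w
  have h := hβ e he (fun k => chainE a (chainL (w k)))
  obtain ⟨i, hi1, hi2⟩ := key e.2.1 w
  obtain ⟨j, hj1, hj2⟩ := key e.2.2 w
  rw [← hi2, ← hj2]
  exact efun i j (by rw [← hi1, ← hj1]; exact h)

/-! ### The two main implications -/

lemma kleene_satAll {E : Set (Σ n : ℕ, BITerm n × BITerm n)} (hD3 : SatAll (Fin 3) E)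
    {β : Type*} [BILattice β] (hK : IsKleeneAlg β) : SatAll β E := by
  intro e he v
  by_contra hne
  have hcase : ¬ (e.2.1.eval v ≤ e.2.2.eval v) ∨ ¬ (e.2.2.eval v ≤ e.2.1.eval v) := by
    by_contra hc
    push_neg at hc
    exact hne (le_antisymm hc.1 hc.2)
  rcases hcase with hc | hc
  · obtain ⟨f, hb, ht, hm, hj, hi, hfab⟩ := kalman_hom hK hc
    have h1 := hD3 e he (f ∘ v)
    rw [← bi_hom_eval f hb ht hm hj hi, ← bi_hom_eval f hb ht hm hj hi] at h1
    exact hfab (le_of_eq h1)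
  · obtain ⟨f, hb, ht, hm, hj, hi, hfab⟩ := kalman_hom hK hc
    have h1 := hD3 e he (f ∘ v)
    rw [← bi_hom_eval f hb ht hm hj hi, ← bi_hom_eval f hb ht hm hj hi] at h1
    exact hfab (le_of_eq h1.symm)

lemma ortho_of_not_D3 {E : Set (Σ n : ℕ, BITerm n × BITerm n)} (h : ¬ SatAll (Fin 3) E)
    {β : Type*} [BILattice β] (hβ : SatAll β E) : IsOrtho β := by
  intro x
  by_contra hx
  exact h (chain_transfer hβ hx)


/-- For a subvariety `V` of BI-lattices, given by a set of equations `E`: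
`D3 ∈ V` iff `V` contains all Kleene algebras, and `D3 ∉ V` iff every member of
`V` is an ortholattice; consequently `(OL, KA)` is a splitting pair in the
lattice of subvarieties of BI-lattices. -/
theorem D3_splitting (E : Set (Σ n : ℕ, BITerm n × BITerm n)) :
    (SatAll (Fin 3) E ↔ ∀ (β : Type*) [BILattice β], IsKleeneAlg β → SatAll β E) ∧
    ((¬ SatAll (Fin 3) E) ↔ ∀ (β : Type*) [BILattice β], SatAll β E → IsOrtho β) ∧
    ((∀ (β : Type*) [BILattice β], IsKleeneAlg β → SatAll β E) ∨
      (∀ (β : Type*) [BILattice β], SatAll β E → IsOrtho β)) ∧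
    ¬ (∀ (β : Type*) [BILattice β], IsKleeneAlg β → IsOrtho β) := by
  refine ⟨⟨fun h β _ hK => kleene_satAll h hK,
    fun h => satAll_down (h _ ulift_kleene)⟩,
    ⟨fun h β _ hβ => ortho_of_not_D3 h hβ,
    fun h hD3 => ulift_not_ortho (h _ (satAll_up hD3))⟩, ?_,
    fun H => ulift_not_ortho (H _ ulift_kleene)⟩
  by_cases h : SatAll (Fin 3) E
  · exact Or.inl fun β _ hK => kleene_satAll h hK
  · exact Or.inr fun β _ hβ => ortho_of_not_D3 h hβ
end

section
/- Let L be a bounded involution lattice such that the three-element involution chain D3 does not lie in the variety generated by L. Then L is an ortholattice, i.e., x ∧ x′ = 0 for every x ∈ L. -/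
open scoped Classical

open BILattice

open BZLattice

section D3Aux

open BILattice

variable {L : Type*} [BILattice L]

/-- The graph of the partial quotient map `{⊥, a, a', ⊤} → D3`. -/
def D3rel (a : L) (y : L) (i : Fin 3) : Prop :=
  (i = 0 ∧ y = ⊥) ∨ (i = 1 ∧ (y = a ∨ y = inv a)) ∨ (i = 2 ∧ y = ⊤)

/-- A section of the quotient map. -/
def D3emb (a : L) (i : Fin 3) : L :=
  if i = 0 then ⊥ else if i = 1 then a else ⊤

lemma inv_top_eq : inv (⊤ : L) = ⊥ := by
  have h1 : inv (⊤ : L) ≤ ⊥ := by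
    have h2 := inv_anti (inv (⊥ : L)) ⊤ le_top
    rwa [BILattice.inv_inv] at h2
  exact le_bot_iff.mp h1

lemma inv_bot_eq : inv (⊥ : L) = ⊤ := by
  rw [← inv_top_eq (L := L), BILattice.inv_inv]

lemma D3rel_emb (a : L) : ∀ i : Fin 3, D3rel a (D3emb a i) i := by
  intro i
  fin_cases i
  · exact Or.inl ⟨rfl, rfl⟩
  · exact Or.inr (Or.inl ⟨rfl, Or.inl rfl⟩)
  · exact Or.inr (Or.inr ⟨rfl, rfl⟩)

lemma D3rel_meet {a : L} (ha : a ≤ inv a) {y z : L} {i j : Fin 3}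
    (hy : D3rel a y i) (hz : D3rel a z j) : D3rel a (y ⊓ z) (i ⊓ j) := by
  have haa : a ⊓ inv a = a := inf_eq_left.mpr ha
  have hai : inv a ⊓ a = a := by rw [inf_comm]; exact haa
  rcases hy with ⟨rfl, rfl⟩ | ⟨rfl, (rfl | rfl)⟩ | ⟨rfl, rfl⟩ <;>
    rcases hz with ⟨rfl, rfl⟩ | ⟨rfl, (rfl | rfl)⟩ | ⟨rfl, rfl⟩
  · exact Or.inl ⟨by decide, by simp⟩
  · exact Or.inl ⟨by decide, by simp⟩
  · exact Or.inl ⟨by decide, by simp⟩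
  · exact Or.inl ⟨by decide, by simp⟩
  · exact Or.inl ⟨by decide, by simp⟩
  · exact Or.inr (Or.inl ⟨by decide, Or.inl (by simp)⟩)
  · exact Or.inr (Or.inl ⟨by decide, Or.inl haa⟩)
  · exact Or.inr (Or.inl ⟨by decide, Or.inl (by simp)⟩)
  · exact Or.inl ⟨by decide, by simp⟩
  · exact Or.inr (Or.inl ⟨by decide, Or.inl hai⟩)
  · exact Or.inr (Or.inl ⟨by decide, Or.inr (by simp)⟩)
  · exact Or.inr (Or.inl ⟨by decide, Or.inr (by simp)⟩)
  · exact Or.inl ⟨by decide, by simp⟩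
  · exact Or.inr (Or.inl ⟨by decide, Or.inl (by simp)⟩)
  · exact Or.inr (Or.inl ⟨by decide, Or.inr (by simp)⟩)
  · exact Or.inr (Or.inr ⟨by decide, by simp⟩)

lemma D3rel_join {a : L} (ha : a ≤ inv a) {y z : L} {i j : Fin 3}
    (hy : D3rel a y i) (hz : D3rel a z j) : D3rel a (y ⊔ z) (i ⊔ j) := by
  have haa : a ⊔ inv a = inv a := sup_eq_right.mpr ha
  have hai : inv a ⊔ a = inv a := by rw [sup_comm]; exact haa
  rcases hy with ⟨rfl, rfl⟩ | ⟨rfl, (rfl | rfl)⟩ | ⟨rfl, rfl⟩ <;>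
    rcases hz with ⟨rfl, rfl⟩ | ⟨rfl, (rfl | rfl)⟩ | ⟨rfl, rfl⟩
  · exact Or.inl ⟨by decide, by simp⟩
  · exact Or.inr (Or.inl ⟨by decide, Or.inl (by simp)⟩)
  · exact Or.inr (Or.inl ⟨by decide, Or.inr (by simp)⟩)
  · exact Or.inr (Or.inr ⟨by decide, by simp⟩)
  · exact Or.inr (Or.inl ⟨by decide, Or.inl (by simp)⟩)
  · exact Or.inr (Or.inl ⟨by decide, Or.inl (by simp)⟩)
  · exact Or.inr (Or.inl ⟨by decide, Or.inr haa⟩)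
  · exact Or.inr (Or.inr ⟨by decide, by simp⟩)
  · exact Or.inr (Or.inl ⟨by decide, Or.inr (by simp)⟩)
  · exact Or.inr (Or.inl ⟨by decide, Or.inr hai⟩)
  · exact Or.inr (Or.inl ⟨by decide, Or.inr (by simp)⟩)
  · exact Or.inr (Or.inr ⟨by decide, by simp⟩)
  · exact Or.inr (Or.inr ⟨by decide, by simp⟩)
  · exact Or.inr (Or.inr ⟨by decide, by simp⟩)
  · exact Or.inr (Or.inr ⟨by decide, by simp⟩)
  · exact Or.inr (Or.inr ⟨by decide, by simp⟩)

lemma D3rel_inv {a : L} {y : L} {i : Fin 3}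
    (hy : D3rel a y i) : D3rel a (inv y) (inv i) := by
  rcases hy with ⟨rfl, rfl⟩ | ⟨rfl, (rfl | rfl)⟩ | ⟨rfl, rfl⟩
  · exact Or.inr (Or.inr ⟨by decide, inv_bot_eq⟩)
  · exact Or.inr (Or.inl ⟨by decide, Or.inr rfl⟩)
  · exact Or.inr (Or.inl ⟨by decide, Or.inl (inv_inv a)⟩)
  · exact Or.inl ⟨by decide, inv_top_eq⟩

lemma D3rel_functional {a : L} (hane : a ≠ ⊥) (hiane : inv a ≠ ⊥)
    (hanet : a ≠ ⊤) (hianet : inv a ≠ ⊤) (hbt : (⊥ : L) ≠ ⊤) :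
    ∀ {y : L} {i j : Fin 3}, D3rel a y i → D3rel a y j → i = j := by
  rintro y i j (⟨rfl, rfl⟩ | ⟨rfl, (rfl | rfl)⟩ | ⟨rfl, rfl⟩) hz <;>
    rcases hz with ⟨rfl, h2⟩ | ⟨rfl, h2⟩ | ⟨rfl, h2⟩ <;>
      first
        | rfl
        | (exfalso; rcases h2 with h2 | h2 <;> simp_all)
        | (exfalso; simp_all)

lemma D3rel_eval {a : L} (ha : a ≤ inv a) :
    ∀ {m : ℕ} (s : BITerm m) (w : Fin m → Fin 3),
      D3rel a (s.eval fun k => D3emb a (w k)) (s.eval w) := by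
  intro m s
  induction s with
  | var k =>
      intro w
      simp only [BITerm.eval, BITerm.evalWith]
      exact D3rel_emb a (w k)
  | bot =>
      intro w
      simp only [BITerm.eval, BITerm.evalWith]
      exact Or.inl ⟨rfl, rfl⟩
  | top =>
      intro w
      simp only [BITerm.eval, BITerm.evalWith]
      exact Or.inr (Or.inr ⟨rfl, rfl⟩)
  | meet t₁ t₂ ih₁ ih₂ =>
      intro w
      simp only [BITerm.eval, BITerm.evalWith] at ih₁ ih₂ ⊢
      exact D3rel_meet ha (ih₁ w) (ih₂ w)
  | join t₁ t₂ ih₁ ih₂ =>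
      intro w
      simp only [BITerm.eval, BITerm.evalWith] at ih₁ ih₂ ⊢
      exact D3rel_join ha (ih₁ w) (ih₂ w)
  | invo t₁ ih₁ =>
      intro w
      simp only [BITerm.eval, BITerm.evalWith] at ih₁ ⊢
      exact D3rel_inv (ih₁ w)

end D3Aux

open BILattice in
/-- If `L` is a bounded involution lattice such that the three-element involution
chain `D3` does not lie in the variety generated by `L` (i.e., some BI-equation
valid in `L` fails in `D3`), then `L` is an ortholattice. -/
theorem ortholattice_of_D3_not_in_generated_variety {L : Type*} [BILattice L]
    (h : ¬ ∀ (n : ℕ) (t u : BITerm n),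
        (∀ v : Fin n → L, t.eval v = u.eval v) →
          ∀ v : Fin n → Fin 3, t.eval v = u.eval v) :
    ∀ x : L, x ⊓ inv x = ⊥ := by
  intro x
  by_contra hx
  apply h
  intro n t u hL v
  set a := x ⊓ inv x with ha
  have hainv : a ≤ inv a :=
    le_trans inf_le_right (inv_anti _ _ inf_le_left)
  have hane : a ≠ ⊥ := hx
  have hiane : inv a ≠ ⊥ := by
    intro he
    exact hane (le_bot_iff.mp (he ▸ hainv))
  have hianet : inv a ≠ ⊤ := by
    intro he
    apply hane
    rw [← BILattice.inv_inv a, he, inv_top_eq]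
  have hanet : a ≠ ⊤ := by
    intro he
    exact hiane (by rw [he, inv_top_eq])
  have hbt : (⊥ : L) ≠ ⊤ := by
    intro he
    exact hane (le_bot_iff.mp (he ▸ le_top))
  have h1 := D3rel_eval hainv t v
  have h2 := D3rel_eval hainv u v
  rw [hL (fun k => D3emb a (v k))] at h1
  exact D3rel_functional hane hiane hanet hianet hbt h1 h2
end

section
/- An antiortholattice A with |A| ≥ 3 satisfies the identity (x ∧ x′)~ ∨ (y ∧ y′)~ ∨ (x ∧ x′) ≈ (x ∧ x′)~ ∨ (y ∧ y′)~ ∨ (y ∧ y′) if and only if A is of the form D2 ⊕ L ⊕ D2 for some ortholattice L; more precisely, if A satisfies this identity then the interval [c, c′], where c = a ∧ a′ for any a ∈ A \ {0,1}, equals A \ {0,1} and is an ortholattice under the restricted operations, and A = D2 ⊕ [c,c′] ⊕ D2. -/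
open scoped Classical

open BILattice

open BZLattice

section Aux
variable {A : Type*} [Antiortholattice A]

lemma my_inv_top_s16 : inv (⊤ : A) = ⊥ := by
  have h := inv_anti (inv (⊥ : A)) ⊤ le_top
  rw [BILattice.inv_inv] at h
  exact le_bot_iff.mp h

lemma my_inv_bot_s16 : inv (⊥ : A) = ⊤ := by
  have := BILattice.inv_inv (⊤ : A)
  rw [my_inv_top_s16] at this
  exact this

lemma my_inv_inf (a b : A) : inv (a ⊓ b) = inv a ⊔ inv b := by
  apply le_antisymm
  · have h1 : inv (inv a ⊔ inv b) ≤ a ⊓ b := by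
      refine le_inf ?_ ?_
      · have := inv_anti (inv a) (inv a ⊔ inv b) le_sup_left
        rwa [BILattice.inv_inv] at this
      · have := inv_anti (inv b) (inv a ⊔ inv b) le_sup_right
        rwa [BILattice.inv_inv] at this
    have := inv_anti _ _ h1
    rwa [BILattice.inv_inv] at this
  · exact sup_le (inv_anti _ _ inf_le_left) (inv_anti _ _ inf_le_right)

lemma my_sharp (a : A) (h : a ⊓ inv a = ⊥) : a = ⊥ ∨ a = ⊤ := by
  apply Antiortholattice.sharp_trivial
  have := congrArg inv h
  rw [my_inv_inf, BILattice.inv_inv, my_inv_bot_s16] at this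
  rwa [sup_comm]

lemma my_brou_top : brou (⊤ : A) = ⊥ := by
  have := brou_inf (⊤ : A); rwa [top_inf_eq] at this

lemma my_brou_eq_bot {a : A} (ha : a ≠ ⊥) : brou a = ⊥ := by
  have hs : brou a ⊓ inv (brou a) = ⊥ := by
    have := brou_inf (brou a)
    rwa [brou_brou] at this
  rcases my_sharp _ hs with h | h
  · exact h
  · exfalso
    have h2 := le_brou_brou a
    rw [h, my_brou_top] at h2
    exact ha (le_bot_iff.mp h2)

lemma my_brou_bot (hbt : (⊥ : A) ≠ ⊤) : brou (⊥ : A) = ⊤ := by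
  have hs : brou (⊥:A) ⊓ inv (brou (⊥:A)) = ⊥ := by
    have := brou_inf (brou (⊥:A))
    rwa [brou_brou] at this
  rcases my_sharp _ hs with h | h
  · exfalso
    have := brou_brou (⊥ : A)
    rw [h, h, my_inv_bot_s16] at this
    exact hbt this
  · exact h

lemma my_meet_ne_bot {a : A} (ha0 : a ≠ ⊥) (ha1 : a ≠ ⊤) : a ⊓ inv a ≠ ⊥ := by
  intro h
  rcases my_sharp a h with h' | h' <;> [exact ha0 h'; exact ha1 h']

end Aux

open BILattice BZLattice in
/-- An antiortholattice `A` with at least 3 elements satisfies the identity (R):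
`(x ∧ x′)~ ∨ (y ∧ y′)~ ∨ (x ∧ x′) ≈ (x ∧ x′)~ ∨ (y ∧ y′)~ ∨ (y ∧ y′)`
iff it is of the form `D2 ⊕ L ⊕ D2` for an ortholattice `L`; precisely, iff
for every `a ∉ {⊥, ⊤}`, setting `c = a ⊓ a′`, the interval `[c, c′]` equals
`A \ {⊥, ⊤}` and every `x ∉ {⊥, ⊤}` satisfies `x ⊓ x′ = c` (so that `[c, c′]`,
with bottom `c`, is an ortholattice under the restricted operations). -/
theorem antiortholattice_eqR_iff_ordinal_sum_of_ortholattice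
    {A : Type*} [Antiortholattice A] (hbt : (⊥ : A) ≠ ⊤)
    (hmid : ∃ a : A, a ≠ ⊥ ∧ a ≠ ⊤) :
    (∀ x y : A,
        brou (x ⊓ inv x) ⊔ brou (y ⊓ inv y) ⊔ (x ⊓ inv x) =
          brou (x ⊓ inv x) ⊔ brou (y ⊓ inv y) ⊔ (y ⊓ inv y)) ↔
      ∀ a : A, a ≠ ⊥ → a ≠ ⊤ →
        Set.Icc (a ⊓ inv a) (inv (a ⊓ inv a)) = {x : A | x ≠ ⊥ ∧ x ≠ ⊤} ∧
        ∀ x : A, x ≠ ⊥ → x ≠ ⊤ → x ⊓ inv x = a ⊓ inv a := by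
  constructor
  · intro hR a ha0 ha1
    have key : ∀ x : A, x ≠ ⊥ → x ≠ ⊤ → x ⊓ inv x = a ⊓ inv a := by
      intro x hx0 hx1
      have h := hR x a
      rw [my_brou_eq_bot (my_meet_ne_bot hx0 hx1),
        my_brou_eq_bot (my_meet_ne_bot ha0 ha1)] at h
      simpa using h
    refine ⟨?_, key⟩
    ext x
    simp only [Set.mem_Icc, Set.mem_setOf_eq]
    constructor
    · rintro ⟨h1, h2⟩
      constructor
      · intro hx
        subst hx
        exact my_meet_ne_bot ha0 ha1 (le_bot_iff.mp h1)
      · intro hx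
        subst hx
        have h3 : inv (a ⊓ inv a) = ⊤ := top_le_iff.mp h2
        have h4 := congrArg inv h3
        rw [BILattice.inv_inv, my_inv_top_s16] at h4
        exact my_meet_ne_bot ha0 ha1 h4
    · rintro ⟨hx0, hx1⟩
      have hc := key x hx0 hx1
      constructor
      · rw [← hc]; exact inf_le_left
      · have : inv (x ⊓ inv x) = inv x ⊔ x := by rw [my_inv_inf, BILattice.inv_inv]
        rw [← hc, this]
        exact le_sup_right
  · intro h x y
    by_cases hx : x ⊓ inv x = ⊥
    · rw [hx, my_brou_bot hbt]; simp
    · by_cases hy : y ⊓ inv y = ⊥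
      · rw [hy, my_brou_bot hbt]
        simp [sup_comm, sup_assoc, sup_left_comm]
      · have hx0 : x ≠ ⊥ := by rintro rfl; simp at hx
        have hx1 : x ≠ ⊤ := by rintro rfl; rw [my_inv_top_s16] at hx; simp at hx
        have hy0 : y ≠ ⊥ := by rintro rfl; simp at hy
        have hy1 : y ≠ ⊤ := by rintro rfl; rw [my_inv_top_s16] at hy; simp at hy
        have := (h x hx0 hx1).2 y hy0 hy1
        rw [this]
end

section
/- For any nonzero cardinal κ, the antiortholattice D2^κ ⊕ D2^κ (the ordinal sum of the Boolean algebra 2^κ with its dual, identified at the shared middle element, endowed with the induced involution and trivial Brouwer complement) is a simple algebra: its only BZ-congruences are the identity and the full relation. -/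
open scoped Classical

open BILattice

open BZLattice

open BILattice BZLattice

/-- `e : Set ι → α` presents the antiortholattice `α` as the ordinal sum
`D2^ι ⊕ (D2^ι)^d` (possibly with a two-element chain in the middle): `e` is a
bounded-lattice embedding of the Boolean algebra of subsets of `ι` onto the
lower half, and every element of `α` lies in the lower half or in its image
under the involution. -/
def IsBoolSumRep (ι : Type*) {α : Type*} [Antiortholattice α] (e : Set ι → α) : Prop :=
  (∀ s t : Set ι, e s ≤ e t ↔ s ⊆ t) ∧
  (∀ s t : Set ι, e (s ∩ t) = e s ⊓ e t) ∧
  (∀ s t : Set ι, e (s ∪ t) = e s ⊔ e t) ∧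
  e ∅ = ⊥ ∧
  (∀ a : α, (∃ s : Set ι, a = e s) ∨ (∃ s : Set ι, a = inv (e s)))

/-- A congruence of a BZ-lattice: an equivalence relation compatible with meet,
join, the involution and the Brouwer complement. -/
def IsBZCong {α : Type*} [BZLattice α] (r : α → α → Prop) : Prop :=
  Equivalence r ∧
  (∀ a b c d : α, r a b → r c d → r (a ⊓ c) (b ⊓ d)) ∧
  (∀ a b c d : α, r a b → r c d → r (a ⊔ c) (b ⊔ d)) ∧
  (∀ a b : α, r a b → r (inv a) (inv b)) ∧
  (∀ a b : α, r a b → r (brou a) (brou b))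

/-- For any nonzero cardinal `κ = |ι|`, the antiortholattice `D2^κ ⊕ D2^κ`
(the ordinal sum of the Boolean algebra `2^κ` with its dual, glued at the shared
middle element, which is the fixpoint of the involution) is simple: its only
BZ-congruences are the identity and the full relation. -/
theorem boolean_ordinal_sum_simple {ι : Type*} [Nonempty ι]
    {α : Type*} [Antiortholattice α] (e : Set ι → α)
    (he : IsBoolSumRep ι e) (hglue : inv (e Set.univ) = e Set.univ) :
    ∀ r : α → α → Prop, IsBZCong r →
      (∀ a b : α, r a b ↔ a = b) ∨ (∀ a b : α, r a b) := by
  obtain ⟨hle, hinf, hsup, hbot, hcover⟩ := he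
  intro r hr
  obtain ⟨heq, hmeet, hjoin, hinvc, hbrouc⟩ := hr
  by_cases hid : ∀ a b : α, r a b → a = b
  · left
    intro a b
    exact ⟨hid a b, fun h => h ▸ heq.refl a⟩
  right
  push_neg at hid
  obtain ⟨a, b, hab, hne⟩ := hid
  -- basic facts about inv
  have hinv_inj : ∀ x y : α, inv x = inv y → x = y := by
    intro x y h
    rw [← BILattice.inv_inv x, h, BILattice.inv_inv]
  have hinv_bot : (inv ⊥ : α) = ⊤ := by
    have h1 : (⊤ : α) = inv (inv ⊤) := (BILattice.inv_inv _).symm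
    have h2 : inv (inv (⊤ : α)) ≤ inv ⊥ := inv_anti _ _ bot_le
    exact le_antisymm le_top (h1 ▸ h2)
  have hsharp : ∀ x : α, x ⊓ inv x = ⊥ → x = ⊥ ∨ x = ⊤ := by
    intro x hx
    have h1 : inv (x ⊔ inv x) ≤ x := by
      have := inv_anti (inv x) (x ⊔ inv x) le_sup_right
      rwa [BILattice.inv_inv] at this
    have h2 : inv (x ⊔ inv x) ≤ inv x := inv_anti _ _ le_sup_left
    have h3 : inv (x ⊔ inv x) = ⊥ := le_bot_iff.mp (hx ▸ le_inf h1 h2)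
    have h4 : x ⊔ inv x = ⊤ := by
      have := congrArg inv h3
      rwa [BILattice.inv_inv, hinv_bot] at this
    exact Antiortholattice.sharp_trivial x h4
  -- brou is trivial
  have hbrou_top : brou (⊤ : α) = ⊥ := by
    have := brou_inf (⊤ : α)
    rwa [top_inf_eq] at this
  have hbrou_bot : brou (⊥ : α) = ⊤ := by
    have := le_brou_brou (⊤ : α)
    rw [hbrou_top] at this
    exact le_antisymm le_top this
  have hbrou_ne : ∀ x : α, x ≠ ⊥ → brou x = ⊥ := by
    intro x hx
    have h1 : brou x ⊓ inv (brou x) = ⊥ := by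
      have := brou_inf (brou x)
      rwa [brou_brou] at this
    rcases hsharp _ h1 with h | h
    · exact h
    · exfalso
      apply hx
      have := brou_inf x
      rwa [h, inf_top_eq] at this
  -- e is injective
  have hinj : ∀ s t : Set ι, e s = e t → s = t := by
    intro s t h
    exact Set.Subset.antisymm ((hle s t).mp h.le) ((hle t s).mp h.ge)
  -- from r ⊥ z with z ≠ ⊥ we get r ⊥ ⊤
  have hbz : ∀ z : α, z ≠ ⊥ → r ⊥ z → r ⊥ ⊤ := by
    intro z hz h
    have := hbrouc _ _ h
    rw [hbrou_bot, hbrou_ne z hz] at this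
    exact heq.symm this
  -- key lemma for strict inclusions in the lower half
  have hA0 : ∀ u v : Set ι, u ⊆ v → u ≠ v → r (e u) (e v) → r ⊥ ⊤ := by
    intro u v huv hne h
    have h1 : r (e u ⊓ e (v \ u)) (e v ⊓ e (v \ u)) := hmeet _ _ _ _ h (heq.refl _)
    rw [← hinf, ← hinf] at h1
    have e1 : u ∩ (v \ u) = ∅ := by
      ext x; simp only [Set.mem_inter_iff, Set.mem_diff, Set.mem_empty_iff_false]; tauto
    have e2 : v ∩ (v \ u) = v \ u := by
      ext x; simp only [Set.mem_inter_iff, Set.mem_diff]; tauto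
    rw [e1, e2, hbot] at h1
    apply hbz _ _ h1
    intro hzero
    apply hne
    apply Set.Subset.antisymm huv
    intro x hx
    by_contra hxu
    have : e (v \ u) ≤ e ∅ := by rw [hbot, hzero]
    have := (hle _ _).mp this ⟨hx, hxu⟩
    exact this
  -- general lower-half lemma
  have hA : ∀ s t : Set ι, s ≠ t → r (e s) (e t) → r ⊥ ⊤ := by
    intro s t hst h
    by_cases hcap : s ∩ t = t
    · have hts : t ⊆ s := by
        intro x hx
        have : x ∈ s ∩ t := by rw [hcap]; exact hx
        exact this.1
      exact hA0 t s hts (fun h' => hst h'.symm) (heq.symm h)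
    · have h1 : r (e (s ∩ t)) (e t) := by
        have := hmeet _ _ _ _ h (heq.refl (e t))
        rwa [inf_idem, ← hinf] at this
      exact hA0 (s ∩ t) t Set.inter_subset_right hcap h1
  -- mixed case lemma
  have hm_le : ∀ t : Set ι, e Set.univ ≤ inv (e t) := by
    intro t
    have := inv_anti (e t) (e Set.univ) ((hle _ _).mpr (Set.subset_univ t))
    rwa [hglue] at this
  have hmix : ∀ s t : Set ι, e s ≠ inv (e t) → r (e s) (inv (e t)) → r ⊥ ⊤ := by
    intro s t hne h
    by_cases hsu : s = Set.univ
    · subst hsu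
      have h2 : r (inv (e Set.univ)) (inv (inv (e t))) := hinvc _ _ h
      rw [hglue, BILattice.inv_inv] at h2
      apply hA Set.univ t _ h2
      intro h'
      exact hne (by rw [← h', hglue])
    · have h1 : r (e s ⊓ e Set.univ) (inv (e t) ⊓ e Set.univ) :=
        hmeet _ _ _ _ h (heq.refl _)
      rw [inf_eq_left.mpr ((hle _ _).mpr (Set.subset_univ s)),
        inf_eq_right.mpr (hm_le t)] at h1
      exact hA s Set.univ hsu h1
  -- case analysis to get r ⊥ ⊤
  have hfull : r ⊥ ⊤ := by
    rcases hcover a with ⟨s, rfl⟩ | ⟨s, rfl⟩ <;> rcases hcover b with ⟨t, rfl⟩ | ⟨t, rfl⟩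
    · exact hA s t (fun h => hne (by rw [h])) hab
    · exact hmix s t hne hab
    · exact hmix t s (fun h => hne h.symm) (heq.symm hab)
    · have h1 : r (e s) (e t) := by
        have := hinvc _ _ hab
        rwa [BILattice.inv_inv, BILattice.inv_inv] at this
      exact hA s t (fun h => hne (by rw [h])) h1
  -- conclude full relation
  have htop : ∀ x : α, r x ⊤ := by
    intro x
    have := hjoin x x ⊥ ⊤ (heq.refl x) hfull
    rwa [sup_bot_eq, sup_top_eq] at this
  intro x y
  exact heq.trans (htop x) (heq.symm (htop y))
end
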